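/- Let M ≥ 1, β > 0, and s ∈ {-1,1}^M a random vector with i.i.d. entries of mean m₀ ∈ [0,1]. Define g(p) = (M/2)p² − (1/β)·E_s[ log(2cosh(β p Σ_μ s_μ)) ] for p ∈ ℝ. Then g is an even function of p and is convex as a function of p² (i.e. p² ↦ g(√(p²)) is convex on [0,∞)). Moreover, if β(1 + (M−1)m₀²) > 1 then the minimum of g is attained away from 0. -/

import Mathlib

/-!
For `c ∈ ℝ` the map `u ↦ log (2 cosh (c √u))` is concave on `[0, ∞)`: its derivative is
`c² · tanh t / t / 2` at `t = |c| √u`, and `tanh t / t` decreases since `tanh` is concave on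
`[0, ∞)` with `tanh 0 = 0`. So `u ↦ g (√u)` is a linear function minus an average of concave ones.

For the minimiser, `log (2 cosh x) ≥ log 2 + x² / 2 - x⁴ / 4` gives
`g p ≤ g 0 - (β E[S²] - M) p² / 2 + O(p⁴)`, and `E[S²] = M (1 + (M - 1) m₀²)` for `S = Σ_μ s_μ`,
so under the hypothesis `g` takes values below `g 0`. As `log (2 cosh x) ≤ log 2 + |x|`, `g` grows
like `M p² / 2` and thus attains its minimum, necessarily away from `0`.
-/

open Finset Real Filter Topology

namespace Real

lemma one_add_sq_div_two_le_cosh (x : ℝ) : 1 + x ^ 2 / 2 ≤ cosh x := by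
  have := sum_le_hasSum (range 2)
    (fun n _ => div_nonneg ((even_two_mul n).pow_nonneg x) (Nat.cast_nonneg _)) (hasSum_cosh x)
  simpa [Finset.sum_range_succ] using this

lemma sub_sq_le_log_one_add {t : ℝ} (ht : 0 ≤ t) : t - t ^ 2 ≤ log (1 + t) := by
  have h : 0 < 1 + t := by positivity
  calc t - t ^ 2 ≤ 1 - (1 + t)⁻¹ := by
        rw [show 1 - (1 + t)⁻¹ = t / (1 + t) by field_simp; ring, le_div_iff₀ h]
        nlinarith [pow_nonneg ht 3]
    _ ≤ log (1 + t) := one_sub_inv_le_log_of_pos h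

lemma log_two_add_sq_div_two_sub_le_log_two_mul_cosh (x : ℝ) :
    log 2 + x ^ 2 / 2 - x ^ 4 / 4 ≤ log (2 * cosh x) := by
  have h := sub_sq_le_log_one_add (t := x ^ 2 / 2) (by positivity)
  have hcosh := log_le_log (by positivity) (one_add_sq_div_two_le_cosh x)
  rw [log_mul two_ne_zero (cosh_pos x).ne']
  linarith

lemma log_two_mul_cosh_le (x : ℝ) : log (2 * cosh x) ≤ log 2 + |x| := by
  rw [log_mul two_ne_zero (cosh_pos x).ne', add_le_add_iff_left, log_le_iff_le_exp (cosh_pos x),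
    cosh_eq]
  linarith [exp_le_exp.2 (le_abs_self x), exp_le_exp.2 (neg_le_abs x)]

lemma hasDerivAt_tanh (x : ℝ) : HasDerivAt tanh (cosh x ^ 2)⁻¹ x := by
  have h := (hasDerivAt_sinh x).div (hasDerivAt_cosh x) (cosh_pos x).ne'
  rw [show cosh x * cosh x - sinh x * sinh x = 1 by nlinarith [cosh_sq x], one_div] at h
  exact h.congr_of_eventuallyEq (.of_forall tanh_eq_sinh_div_cosh)

lemma continuous_tanh : Continuous tanh :=
  continuous_iff_continuousAt.2 fun x => (hasDerivAt_tanh x).continuousAt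

lemma concaveOn_tanh : ConcaveOn ℝ (Set.Ici 0) tanh := by
  refine AntitoneOn.concaveOn_of_deriv (convex_Ici 0) continuous_tanh.continuousOn
    (fun x _ => (hasDerivAt_tanh x).differentiableAt.differentiableWithinAt) ?_
  intro x hx y hy hxy
  rw [interior_Ici, Set.mem_Ioi] at hx hy
  rw [(hasDerivAt_tanh x).deriv, (hasDerivAt_tanh y).deriv]
  have : cosh x ≤ cosh y := cosh_le_cosh.2 (by rwa [abs_of_pos hx, abs_of_pos hy])
  gcongr

lemma tanh_div_antitoneOn : AntitoneOn (fun t => tanh t / t) (Set.Ioi 0) := by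
  intro x hx y hy hxy
  have := concaveOn_tanh.neg.secant_mono (a := 0) Set.self_mem_Ici (Set.mem_Ici.2 (le_of_lt hx))
    (Set.mem_Ici.2 (le_of_lt hy)) (ne_of_gt hx) (ne_of_gt hy) hxy
  simpa [neg_div] using this

lemma hasDerivAt_log_two_mul_cosh_sqrt {u : ℝ} (hu : 0 < u) :
    HasDerivAt (fun u => log (2 * cosh √u)) (tanh √u / √u / 2) u := by
  have h := (((hasDerivAt_sqrt hu.ne').cosh).const_mul 2).log (by positivity)
  convert h using 1
  rw [tanh_eq_sinh_div_cosh]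
  field_simp

lemma concaveOn_log_two_mul_cosh_sqrt : ConcaveOn ℝ (Set.Ici 0) fun u => log (2 * cosh √u) := by
  refine AntitoneOn.concaveOn_of_deriv (convex_Ici 0)
    ((continuous_const.mul (continuous_cosh.comp continuous_sqrt)).log
      fun u => (mul_pos two_pos (cosh_pos √u)).ne').continuousOn
    (fun u hu => ?_) ?_
  · rw [interior_Ici] at hu
    exact (hasDerivAt_log_two_mul_cosh_sqrt hu).differentiableAt.differentiableWithinAt
  intro u hu v hv huv
  rw [interior_Ici] at hu hv
  rw [(hasDerivAt_log_two_mul_cosh_sqrt hu).deriv, (hasDerivAt_log_two_mul_cosh_sqrt hv).deriv]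
  gcongr ?_ / 2
  exact tanh_div_antitoneOn (sqrt_pos.2 hu) (sqrt_pos.2 hv) (sqrt_le_sqrt huv)

lemma concaveOn_log_two_mul_cosh_mul_sqrt (c : ℝ) :
    ConcaveOn ℝ (Set.Ici 0) fun u => log (2 * cosh (c * √u)) := by
  have h := concaveOn_log_two_mul_cosh_sqrt.comp_linearMap (c ^ 2 • LinearMap.id)
  refine (h.subset (fun u hu => ?_) (convex_Ici 0)).congr fun u hu => ?_
  · simp only [Set.mem_preimage, LinearMap.smul_apply, LinearMap.id_coe, id_eq, smul_eq_mul,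
      Set.mem_Ici]
    exact mul_nonneg (sq_nonneg c) hu
  · simp only [Function.comp_apply, LinearMap.smul_apply, LinearMap.id_coe, id_eq, smul_eq_mul]
    rw [sqrt_mul (sq_nonneg c), sqrt_sq_eq_abs, ← cosh_abs (c * _), abs_mul,
      abs_of_nonneg (sqrt_nonneg u)]

end Real

lemma concaveOn_sum {𝕜 E β ι : Type*} [Semiring 𝕜] [PartialOrder 𝕜] [AddCommMonoid E]
    [AddCommMonoid β] [PartialOrder β] [IsOrderedAddMonoid β] [SMul 𝕜 E] [Module 𝕜 β]
    {s : Set E} (hs : Convex 𝕜 s) {t : Finset ι} {f : ι → E → β}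
    (hf : ∀ i ∈ t, ConcaveOn 𝕜 s (f i)) : ConcaveOn 𝕜 s fun x => ∑ i ∈ t, f i x := by
  classical
  induction t using Finset.induction_on with
  | empty => simpa using concaveOn_const 0 hs
  | insert i t hi ih =>
    simp_rw [sum_insert hi]
    exact (hf i (mem_insert_self i t)).add (ih fun j hj => hf j (mem_insert_of_mem hj))

lemma exists_lt_apply_zero_of_le_sq_pow_four {f : ℝ → ℝ} {c K : ℝ} (hc : c < 0) (hK : 0 ≤ K)
    (h : ∀ p, f p ≤ f 0 + c * p ^ 2 + K * p ^ 4) : ∃ p, f p < f 0 := by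
  -- at `p = √u` the bound reads `f 0 + u * (c + K * u) = f 0 - u ^ 2`
  set u := -c / (K + 1) with hu_def
  have hu : 0 < u := div_pos (neg_pos.2 hc) (by linarith)
  have hcKu : c + K * u = -u := by
    rw [hu_def]
    field_simp
    ring
  refine ⟨√u, ?_⟩
  have hp := h √u
  rw [show √u ^ 4 = (√u ^ 2) ^ 2 by ring, sq_sqrt hu.le] at hp
  nlinarith

noncomputable def freeEnergy {ι : Type*} [Fintype ι] (a β : ℝ) (w S : ι → ℝ) (p : ℝ) : ℝ :=
  a * p ^ 2 - (1 / β) * ∑ i, w i * log (2 * cosh (β * p * S i))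

section FreeEnergy

variable {ι : Type*} [Fintype ι] {a β : ℝ} {w S : ι → ℝ}

lemma freeEnergy_neg (p : ℝ) : freeEnergy a β w S (-p) = freeEnergy a β w S p := by
  simp only [freeEnergy, neg_sq, mul_neg, neg_mul, cosh_neg]

lemma convexOn_freeEnergy_sqrt (hβ : 0 ≤ β) (hw : ∀ i, 0 ≤ w i) :
    ConvexOn ℝ (Set.Ici 0) fun u => freeEnergy a β w S √u := by
  have hconc : ConcaveOn ℝ (Set.Ici 0)
      fun u => (1 / β) * ∑ i, w i * log (2 * cosh (β * S i * √u)) :=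
    (concaveOn_sum (convex_Ici 0) fun i _ =>
      (concaveOn_log_two_mul_cosh_mul_sqrt (β * S i)).smul (hw i)).smul (by positivity)
  refine (((a • LinearMap.id : ℝ →ₗ[ℝ] ℝ).convexOn (convex_Ici 0)).sub hconc).congr fun u hu => ?_
  simp only [freeEnergy, Pi.sub_apply, LinearMap.smul_apply, LinearMap.id_apply, smul_eq_mul,
    sq_sqrt (Set.mem_Ici.1 hu), mul_right_comm β]

lemma continuous_freeEnergy : Continuous (freeEnergy a β w S) := by
  unfold freeEnergy
  fun_prop (disch := exact fun _ => (mul_pos two_pos (cosh_pos _)).ne')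

lemma freeEnergy_zero (hw1 : ∑ i, w i = 1) : freeEnergy a β w S 0 = -(log 2 / β) := by
  simp only [freeEnergy, mul_zero, zero_mul, cosh_zero, mul_one, ← sum_mul, hw1]
  ring

lemma freeEnergy_le_freeEnergy_zero_add (hβ : 0 < β) (hw : ∀ i, 0 ≤ w i) (hw1 : ∑ i, w i = 1)
    (p : ℝ) :
    freeEnergy a β w S p ≤ freeEnergy a β w S 0 + (a - β * (∑ i, w i * S i ^ 2) / 2) * p ^ 2 +
      β ^ 3 * (∑ i, w i * S i ^ 4) / 4 * p ^ 4 := by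
  have hterm (i : ι) : log 2 * w i + β ^ 2 * p ^ 2 / 2 * (w i * S i ^ 2) -
      β ^ 4 * p ^ 4 / 4 * (w i * S i ^ 4) ≤ w i * log (2 * cosh (β * p * S i)) := by
    linear_combination mul_le_mul_of_nonneg_left
      (log_two_add_sq_div_two_sub_le_log_two_mul_cosh (β * p * S i)) (hw i)
  have hsum := sum_le_sum fun i (_ : i ∈ univ) => hterm i
  simp only [sum_add_distrib, sum_sub_distrib, ← mul_sum, hw1] at hsum
  have h := mul_le_mul_of_nonneg_left hsum (one_div_nonneg.2 hβ.le)
  rw [freeEnergy_zero hw1, freeEnergy]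
  field_simp at h ⊢
  linarith

lemma le_freeEnergy (hβ : 0 < β) (hw : ∀ i, 0 ≤ w i) (hw1 : ∑ i, w i = 1) (q : ℝ) :
    a * q ^ 2 - (∑ i, w i * |S i|) * |q| - log 2 / β ≤ freeEnergy a β w S q := by
  have hterm (i : ι) : w i * log (2 * cosh (β * q * S i)) ≤
      log 2 * w i + β * |q| * (w i * |S i|) := by
    have h := mul_le_mul_of_nonneg_left (log_two_mul_cosh_le (β * q * S i)) (hw i)
    rw [abs_mul, abs_mul, abs_of_pos hβ] at h
    linear_combination h
  have hsum := sum_le_sum fun i (_ : i ∈ univ) => hterm i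
  simp only [sum_add_distrib, ← mul_sum, hw1] at hsum
  have h := mul_le_mul_of_nonneg_left hsum (one_div_nonneg.2 hβ.le)
  rw [freeEnergy]
  field_simp at h ⊢
  linarith

lemma tendsto_freeEnergy_cocompact (ha : 0 < a) (hβ : 0 < β) (hw : ∀ i, 0 ≤ w i)
    (hw1 : ∑ i, w i = 1) : Tendsto (freeEnergy a β w S) (cocompact ℝ) atTop := by
  set A := ∑ i, w i * |S i|
  have hquad : Tendsto (fun t : ℝ => (a * t - A) * t - log 2 / β) atTop atTop :=
    tendsto_atTop_add_const_right _ _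
      ((tendsto_atTop_add_const_right _ _ (tendsto_id.const_mul_atTop ha)).atTop_mul_atTop₀
        tendsto_id)
  refine tendsto_atTop_mono (fun q => ?_) (hquad.comp tendsto_norm_cocompact_atTop)
  refine le_of_eq_of_le ?_ (le_freeEnergy hβ hw hw1 q)
  rw [Function.comp_apply, Real.norm_eq_abs, ← sq_abs q]
  ring

lemma exists_ne_zero_forall_freeEnergy_le (ha : 0 < a) (hβ : 0 < β) (hw : ∀ i, 0 ≤ w i)
    (hw1 : ∑ i, w i = 1) (h : 2 * a < β * ∑ i, w i * S i ^ 2) :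
    ∃ p ≠ 0, ∀ q, freeEnergy a β w S p ≤ freeEnergy a β w S q := by
  have hK : 0 ≤ β ^ 3 * (∑ i, w i * S i ^ 4) / 4 := by
    have := sum_nonneg fun i (_ : i ∈ univ) => mul_nonneg (hw i) ((even_two_mul 2).pow_nonneg (S i))
    positivity
  have hc : a - β * (∑ i, w i * S i ^ 2) / 2 < 0 := by linarith
  obtain ⟨p₀, hp₀⟩ := exists_lt_apply_zero_of_le_sq_pow_four hc hK
    (freeEnergy_le_freeEnergy_zero_add hβ hw hw1)
  obtain ⟨p, hp⟩ :=
    continuous_freeEnergy.exists_forall_le (tendsto_freeEnergy_cocompact ha hβ hw hw1)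
  exact ⟨p, fun h0 => (hp p₀).not_gt (h0 ▸ hp₀), hp⟩

end FreeEnergy

section ProductWeights

variable {α : Type*} [Fintype α] {w : α → ℝ}

lemma Fin.sum_pi_succ {n : ℕ} (F : (Fin (n + 1) → α) → ℝ) :
    ∑ s, F s = ∑ a, ∑ t, F (Fin.cons a t) := by
  rw [← (Fin.consEquiv fun _ => α).sum_comp, Fintype.sum_prod_type]
  rfl

lemma sum_prod_weights_mul_fin_succ {n : ℕ} (F : (Fin (n + 1) → α) → ℝ) :
    ∑ s, (∏ i, w (s i)) * F s =
      ∑ a, w a * ∑ t : Fin n → α, (∏ i, w (t i)) * F (Fin.cons a t) := by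
  simp only [Fin.sum_pi_succ, Fin.prod_univ_succ, Fin.cons_zero, Fin.cons_succ, mul_sum,
    mul_assoc]

lemma sum_prod_weights {ι : Type*} [Fintype ι] [DecidableEq ι] (hw : ∑ a, w a = 1) :
    ∑ s : ι → α, ∏ i, w (s i) = 1 := by
  rw [← Fintype.prod_sum]
  simp [hw]

lemma sum_prod_weights_mul_sum (hw : ∑ a, w a = 1) (x : α → ℝ) (n : ℕ) :
    ∑ s : Fin n → α, (∏ i, w (s i)) * ∑ i, x (s i) = n * ∑ a, w a * x a := by
  induction n with
  | zero => simp
  | succ n ih =>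
    rw [sum_prod_weights_mul_fin_succ]
    simp only [Fin.sum_univ_succ, Fin.cons_zero, Fin.cons_succ, mul_add, sum_add_distrib,
      ← sum_mul, sum_prod_weights hw, ih, one_mul, hw]
    push_cast
    ring

lemma sum_prod_weights_mul_sum_sq (hw : ∑ a, w a = 1) (x : α → ℝ) (n : ℕ) :
    ∑ s : Fin n → α, (∏ i, w (s i)) * (∑ i, x (s i)) ^ 2 =
      n * ∑ a, w a * x a ^ 2 + n * (n - 1) * (∑ a, w a * x a) ^ 2 := by
  induction n with
  | zero => simp
  | succ n ih =>
    rw [sum_prod_weights_mul_fin_succ]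
    simp only [Fin.sum_univ_succ, Fin.cons_zero, Fin.cons_succ, add_sq, mul_add, sum_add_distrib,
      ← sum_mul, sum_prod_weights hw, ih, one_mul, hw, mul_left_comm _ (2 * x _), ← mul_sum,
      sum_prod_weights_mul_sum hw]
    have cross (a : α) : 2 * x a * (w a * (n * ∑ b, w b * x b)) =
        w a * x a * (2 * n * ∑ b, w b * x b) := by ring
    simp only [cross, ← sum_mul]
    push_cast
    ring

end ProductWeights

section Spins

noncomputable def spin (b : Bool) : ℝ := if b then 1 else -1

noncomputable def spinWeight (m₀ : ℝ) (b : Bool) : ℝ := (1 + spin b * m₀) / 2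

lemma spinWeight_nonneg {m₀ : ℝ} (h0 : -1 ≤ m₀) (h1 : m₀ ≤ 1) (b : Bool) :
    0 ≤ spinWeight m₀ b := by
  cases b <;> simp [spinWeight, spin] <;> linarith

lemma sum_spinWeight (m₀ : ℝ) : ∑ b, spinWeight m₀ b = 1 := by
  simp [spinWeight, spin]; ring

lemma sum_spinWeight_mul_spin (m₀ : ℝ) : ∑ b, spinWeight m₀ b * spin b = m₀ := by
  simp [spinWeight, spin]; ring

lemma sum_spinWeight_mul_spin_sq (m₀ : ℝ) : ∑ b, spinWeight m₀ b * spin b ^ 2 = 1 := by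
  simp [spinWeight, spin]; ring

end Spins

/-- The free energy along the homogeneous direction,
`g(p) = (M/2)p² − (1/β)·E_s[log(2cosh(βp Σ_μ s_μ))]`, is even, convex as a
function of `p²`, and if `β(1+(M−1)m₀²) > 1` its minimum is attained away from 0. -/
theorem free_energy_homogeneous_line
    (M : ℕ) (hM : 1 ≤ M) (β m₀ : ℝ) (hβ : 0 < β)
    (hm₀0 : 0 ≤ m₀) (hm₀1 : m₀ ≤ 1)
    (g : ℝ → ℝ)
    (hg : ∀ p : ℝ, g p = (M / 2) * p ^ 2 - (1 / β) *
      ∑ s : Fin M → Bool,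
        (∏ ν : Fin M, ((1 + (if s ν then (1:ℝ) else -1) * m₀) / 2)) *
          Real.log (2 * Real.cosh (β * p * ∑ μ : Fin M, (if s μ then (1:ℝ) else -1)))) :
    (∀ p : ℝ, g (-p) = g p)
    ∧ ConvexOn ℝ (Set.Ici (0:ℝ)) (fun u => g (Real.sqrt u))
    ∧ (1 < β * (1 + ((M:ℝ) - 1) * m₀ ^ 2) →
        ∃ p : ℝ, p ≠ 0 ∧ ∀ q : ℝ, g p ≤ g q) := by
  have hg : g = freeEnergy (M / 2) β (fun s : Fin M → Bool => ∏ ν, spinWeight m₀ (s ν))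
      (fun s => ∑ μ, spin (s μ)) := funext hg
  have hw : ∀ s : Fin M → Bool, 0 ≤ ∏ ν, spinWeight m₀ (s ν) := fun s =>
    prod_nonneg fun ν _ => spinWeight_nonneg (by linarith) hm₀1 (s ν)
  have hw1 := sum_prod_weights (ι := Fin M) (sum_spinWeight m₀)
  subst hg
  refine ⟨freeEnergy_neg, convexOn_freeEnergy_sqrt hβ.le hw, fun hcond => ?_⟩
  refine exists_ne_zero_forall_freeEnergy_le (by positivity) hβ hw hw1 ?_
  rw [sum_prod_weights_mul_sum_sq (sum_spinWeight m₀), sum_spinWeight_mul_spin_sq,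
    sum_spinWeight_mul_spin]
  have hM' : (1 : ℝ) ≤ M := by exact_mod_cast hM
  nlinarith
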